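/- Let K be a positive natural number, p : Fin K → ℝ a probability vector with p_k > 0 for all k and ∑_k p_k = 1, and a : Fin K → ℝ a prior with a_k > 0 for all k. For each natural number n define the Dirichlet posterior parameters α_k(n) = a_k + n·p_k and S(n) = ∑_k α_k(n). Then the aleatoric uncertainty converges to the true entropy of the data distribution: lim_{n→∞} ∑_k (α_k(n)/S(n)) · (ψ(S(n)+1) − ψ(α_k(n)+1)) = ∑_k negMulLog(p_k). (Parametric Epistemic Convergence, aleatoric part: as training samples in a leaf grow, aleatoric uncertainty converges to the true data entropy.) -/

import Mathlib

/-- The digamma function: the logarithmic derivative of the Gamma function. -/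
noncomputable def digamma (x : ℝ) : ℝ :=
  deriv (fun t => Real.log (Real.Gamma t)) x

/-!
Convexity of `log ∘ Γ` together with `log Γ(x + 1) - log Γ(x) = log x` squeezes `ψ(x + 1)`
between `log x` and `log (x + 1)`, so `ψ(x + 1) = log x + o(1)`. Writing `q = α / S`, one term
of the aleatoric uncertainty is therefore
`q (ψ(S + 1) - ψ(α + 1)) = q · o(1) - q log q = negMulLog q + o(1)`,
and `q = (a_k + n p_k) / (∑ a + n) → p_k`.
-/

open Filter Real Set Topology

lemma differentiableAt_log_Gamma {x : ℝ} (hx : 0 < x) :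
    DifferentiableAt ℝ (fun t => log (Gamma t)) x :=
  (differentiableAt_Gamma fun m => by linarith [(Nat.cast_nonneg m : (0 : ℝ) ≤ m)]).log
    (Gamma_pos_of_pos hx).ne'

lemma log_Gamma_add_one_sub_log_Gamma {x : ℝ} (hx : 0 < x) :
    log (Gamma (x + 1)) - log (Gamma x) = log x := by
  rw [Gamma_add_one hx.ne', log_mul hx.ne' (Gamma_pos_of_pos hx).ne']
  ring

lemma log_le_digamma_add_one {x : ℝ} (hx : 0 < x) : log x ≤ digamma (x + 1) := by
  have hx1 : 0 < x + 1 := by linarith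
  have h := convexOn_log_Gamma.slope_le_deriv (mem_Ioi.2 hx) (mem_Ioi.2 hx1) (by linarith)
    (differentiableAt_log_Gamma hx1)
  simpa [slope_def_field, Function.comp_def, digamma, log_Gamma_add_one_sub_log_Gamma hx] using h

lemma digamma_add_one_le_log_add_one {x : ℝ} (hx : 0 < x) : digamma (x + 1) ≤ log (x + 1) := by
  have hx1 : 0 < x + 1 := by linarith
  have hx2 : 0 < x + 1 + 1 := by linarith
  have h := convexOn_log_Gamma.deriv_le_slope (mem_Ioi.2 hx1) (mem_Ioi.2 hx2) (by linarith)
    (differentiableAt_log_Gamma hx1)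
  simpa [slope_def_field, Function.comp_def, digamma, log_Gamma_add_one_sub_log_Gamma hx1] using h

lemma tendsto_digamma_add_one_sub_log :
    Tendsto (fun x => digamma (x + 1) - log x) atTop (𝓝 0) := by
  refine tendsto_of_tendsto_of_tendsto_of_le_of_le' tendsto_const_nhds
    (tendsto_log_comp_add_sub_log 1) ?_ ?_
  · filter_upwards [eventually_gt_atTop 0] with x hx
    linarith [log_le_digamma_add_one hx]
  · filter_upwards [eventually_gt_atTop 0] with x hx
    linarith [digamma_add_one_le_log_add_one hx]

lemma tendsto_mul_digamma_sub_digamma {ι : Type*} {l : Filter ι} {α S : ι → ℝ} {q : ℝ}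
    (hα : Tendsto α l atTop) (hS : Tendsto S l atTop) (hq : Tendsto (fun i => α i / S i) l (𝓝 q)) :
    Tendsto (fun i => α i / S i * (digamma (S i + 1) - digamma (α i + 1))) l
      (𝓝 (negMulLog q)) := by
  have herr := (tendsto_digamma_add_one_sub_log.comp hS).sub
    (tendsto_digamma_add_one_sub_log.comp hα)
  have hlim := (hq.mul herr).add ((continuous_negMulLog.tendsto q).comp hq)
  rw [sub_self, mul_zero, zero_add] at hlim
  refine hlim.congr' ?_
  filter_upwards [hα.eventually_gt_atTop 0, hS.eventually_gt_atTop 0] with i hαi hSi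
  simp only [Function.comp_apply, negMulLog, log_div hαi.ne' hSi.ne']
  ring

lemma tendsto_add_mul_div_add {ι : Type*} {l : Filter ι} {x : ι → ℝ} (hx : Tendsto x l atTop)
    (a b c : ℝ) : Tendsto (fun i => (a + x i * b) / (c + x i)) l (𝓝 b) := by
  have hcx : Tendsto (fun i => c + x i) l atTop := tendsto_atTop_add_const_left l c hx
  have h := (tendsto_const_nhds (x := a - c * b)).div_atTop hcx
  rw [← zero_add b]
  refine (h.add_const b).congr' ?_
  filter_upwards [hcx.eventually_gt_atTop 0] with i hi
  field_simp
  ring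

theorem aleatoric_tendsto_entropy_general (K : ℕ)
    (p : Fin K → ℝ) (hp : ∀ k, 0 < p k) (hpsum : ∑ k, p k = 1)
    (a : Fin K → ℝ) :
    Filter.Tendsto
      (fun n : ℕ =>
        ∑ k, ((a k + n * p k) / ∑ j, (a j + n * p j)) *
          (digamma ((∑ j, (a j + n * p j)) + 1) - digamma ((a k + n * p k) + 1)))
      Filter.atTop (nhds (∑ k, Real.negMulLog (p k))) := by
  have hn : Tendsto (fun n : ℕ => (n : ℝ)) atTop atTop := tendsto_natCast_atTop_atTop
  have hS : ∀ n : ℕ, ∑ j, (a j + n * p j) = ∑ j, a j + n := fun n => by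
    rw [Finset.sum_add_distrib, ← Finset.mul_sum, hpsum, mul_one]
  simp only [hS]
  refine tendsto_finsetSum _ fun k _ => tendsto_mul_digamma_sub_digamma ?_
    (tendsto_atTop_add_const_left _ _ hn) (tendsto_add_mul_div_add hn _ _ _)
  exact tendsto_atTop_add_const_left _ _ (hn.atTop_mul_const (hp k))

/-- **Parametric Epistemic Convergence (aleatoric part).** For Dirichlet posterior
parameters `α k (n) = a k + n * p k` with positive prior `a` and true data distribution
`p` (a positive probability vector), the analytical aleatoric uncertainty
`∑ k, (α k / S)(ψ(S+1) − ψ(α k + 1))` converges, as the number of training samples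
`n → ∞`, to the Shannon entropy `∑ k, negMulLog (p k)` of the true data
distribution. -/
theorem aleatoric_tendsto_entropy (K : ℕ) (hK : 0 < K)
    (p : Fin K → ℝ) (hp : ∀ k, 0 < p k) (hpsum : ∑ k, p k = 1)
    (a : Fin K → ℝ) (ha : ∀ k, 0 < a k) :
    Filter.Tendsto
      (fun n : ℕ =>
        ∑ k, ((a k + n * p k) / ∑ j, (a j + n * p j)) *
          (digamma ((∑ j, (a j + n * p j)) + 1) - digamma ((a k + n * p k) + 1)))
      Filter.atTop (nhds (∑ k, Real.negMulLog (p k))) :=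
  aleatoric_tendsto_entropy_general K p hp hpsum a
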